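/- arXiv:2411.03712 — 2 statements merged into one kernel-verified Lean document; each statement's English description precedes it below -/
import Mathlib

section
/- Let t > 0, K, a ∈ ℝ and define ℓ(s) = e^{Ks}(cos(πs/(2t)) + a·sin(πs/t)) for s ∈ [0,t]. Then ∫₀ᵗ (ℓ'(s))²·e^{-2Ks} ds = (K/2)(Kt(1+a²) + 16Kta/(3π)) - K + π²a²/(2t) + π²/(8t) + 2πa/(3t). -/
/-!
Write `ℓ s = exp (K * s) * f (c * s)` with `c = π / (2 * t)` and `f x = cos x + a * sin (2 * x)`.
The weight `exp (-2 * K * s)` cancels the exponential, leaving `(K * f (c * s) + c * f' (c * s)) ^ 2`.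
In the expanded square the cross term is `K` times the derivative of `f ^ 2`, so it integrates to
`K * (f (π / 2) ^ 2 - f 0 ^ 2) = -K`; after the substitution `x = c * s` the other two terms are
elementary trigonometric integrals over `[0, π / 2]`.
-/

open Real intervalIntegral

theorem integral_mul_add_deriv_sq {f f' : ℝ → ℝ} (K a b : ℝ) (hf : ∀ x, HasDerivAt f (f' x) x)
    (hf' : Continuous f') :
    ∫ x in a..b, (K * f x + f' x) ^ 2
      = K ^ 2 * (∫ x in a..b, f x ^ 2) + K * (f b ^ 2 - f a ^ 2) + ∫ x in a..b, f' x ^ 2 := by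
  have hfc : Continuous f := continuous_iff_continuousAt.2 fun x => (hf x).continuousAt
  have hsq : ∫ x in a..b, f' x * f x + f x * f' x = f b ^ 2 - f a ^ 2 := by
    rw [integral_deriv_mul_eq_sub (fun x _ => hf x) (fun x _ => hf x)
      (hf'.intervalIntegrable a b) (hf'.intervalIntegrable a b)]
    ring
  have hexpand (x : ℝ) : (K * f x + f' x) ^ 2
      = (K ^ 2 * f x ^ 2 + K * (f' x * f x + f x * f' x)) + f' x ^ 2 := by ring
  simp_rw [hexpand]
  rw [integral_add (by apply Continuous.intervalIntegrable; fun_prop)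
      (by apply Continuous.intervalIntegrable; fun_prop),
    integral_add (by apply Continuous.intervalIntegrable; fun_prop)
      (by apply Continuous.intervalIntegrable; fun_prop),
    integral_const_mul, integral_const_mul, hsq]

theorem deriv_exp_mul_sq_mul_exp {f : ℝ → ℝ} {f' : ℝ} (K : ℝ) {s : ℝ} (hf : HasDerivAt f f' s) :
    deriv (fun s => exp (K * s) * f s) s ^ 2 * exp (-2 * K * s) = (K * f s + f') ^ 2 := by
  have hexp : HasDerivAt (fun s => exp (K * s)) (exp (K * s) * K) s := by
    simpa using ((hasDerivAt_id s).const_mul K).exp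
  have hsq : exp (K * s) ^ 2 * exp (-2 * K * s) = 1 := by
    rw [← exp_nat_mul, ← exp_add]; ring_nf; exact exp_zero
  rw [HasDerivAt.deriv (f := fun s => exp (K * s) * f s) (hexp.mul hf)]
  linear_combination (K * f s + f') ^ 2 * hsq

theorem integral_deriv_exp_mul_comp_mul_sq_mul_exp {f f' : ℝ → ℝ} (K t : ℝ) {c : ℝ} (hc : c ≠ 0)
    (hf : ∀ x, HasDerivAt f (f' x) x) (hf' : Continuous f') :
    ∫ s in 0..t, deriv (fun s => exp (K * s) * f (c * s)) s ^ 2 * exp (-2 * K * s)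
      = K ^ 2 / c * (∫ x in 0..c * t, f x ^ 2) + K * (f (c * t) ^ 2 - f 0 ^ 2)
        + c * ∫ x in 0..c * t, f' x ^ 2 := by
  have hcomp (s : ℝ) : HasDerivAt (fun s => f (c * s)) (f' (c * s) * c) s := by
    have := (hf (c * s)).comp s ((hasDerivAt_id s).const_mul c)
    simpa [Function.comp_def] using this
  have hintegrand (s : ℝ) :
      deriv (fun s => exp (K * s) * f (c * s)) s ^ 2 * exp (-2 * K * s)
        = c ^ 2 * (K / c * f (c * s) + f' (c * s)) ^ 2 := by
    rw [deriv_exp_mul_sq_mul_exp K (hcomp s)]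
    field_simp
  simp_rw [hintegrand]
  rw [integral_const_mul, integral_comp_mul_left (fun x => (K / c * f x + f' x) ^ 2) hc,
    integral_mul_add_deriv_sq _ _ _ hf hf', mul_zero, smul_eq_mul]
  field_simp

theorem integral_cos_add_mul_sin_two_mul_sq (a : ℝ) :
    ∫ x in 0..π / 2, (cos x + a * sin (2 * x)) ^ 2 = π / 4 * (1 + a ^ 2) + 4 * a / 3 := by
  have hexpand (x : ℝ) : (cos x + a * sin (2 * x)) ^ 2
      = cos x ^ 2 + 4 * a * (sin x * cos x ^ 2) + 4 * a ^ 2 * (sin x ^ 2 * cos x ^ 2) := by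
    rw [sin_two_mul]; ring
  simp_rw [hexpand]
  simp (disch := exact Continuous.intervalIntegrable (by fun_prop) _ _) only
    [integral_add, integral_const_mul]
  rw [integral_cos_sq, integral_sin_mul_cos_sq, integral_sin_sq_mul_cos_sq,
    show 4 * (π / 2) = 2 * π by ring]
  simp only [cos_pi_div_two, sin_pi_div_two, mul_one, cos_zero, sin_zero, mul_zero, sub_self, zero_add,
    sub_zero, one_pow, ne_eq, OfNat.ofNat_ne_zero, not_false_eq_true, zero_pow, one_div, sin_two_pi, zero_div]
  ring

theorem integral_neg_sin_add_mul_cos_two_mul_sq (a : ℝ) :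
    ∫ x in 0..π / 2, (-sin x + 2 * a * cos (2 * x)) ^ 2
      = π / 4 * (1 + 4 * a ^ 2) + 4 * a / 3 := by
  have hexpand (x : ℝ) : (-sin x + 2 * a * cos (2 * x)) ^ 2
      = sin x ^ 2 + 4 * a * sin x - 8 * a * (sin x * cos x ^ 2) + 4 * a ^ 2
        - 16 * a ^ 2 * (sin x ^ 2 * cos x ^ 2) := by
    rw [cos_two_mul]
    linear_combination 16 * a ^ 2 * cos x ^ 2 * sin_sq_add_cos_sq x
  simp_rw [hexpand]
  simp (disch := exact Continuous.intervalIntegrable (by fun_prop) _ _) only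
    [integral_add, integral_sub, integral_const_mul, integral_const]
  rw [integral_sin_sq, integral_sin, integral_sin_mul_cos_sq, integral_sin_sq_mul_cos_sq,
    show 4 * (π / 2) = 2 * π by ring]
  simp only [sin_zero, cos_zero, mul_one, sin_pi_div_two, cos_pi_div_two, mul_zero, sub_self, zero_add,
    sub_zero, one_pow, ne_eq, OfNat.ofNat_ne_zero, not_false_eq_true, zero_pow, one_div, smul_eq_mul, sin_two_pi,
    zero_div]
  ring

theorem ell_deriv_square_weighted_integral (t K a : ℝ) (ht : 0 < t)
    (ℓ : ℝ → ℝ)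
    (hℓ : ∀ s, ℓ s = Real.exp (K * s) *
      (Real.cos (π * s / (2 * t)) + a * Real.sin (π * s / t))) :
    (∫ s in (0:ℝ)..t, (deriv ℓ s) ^ 2 * Real.exp (-2 * K * s))
      = (K / 2) * (K * t * (1 + a ^ 2) + 16 * K * t * a / (3 * π)) - K
        + π ^ 2 * a ^ 2 / (2 * t) + π ^ 2 / (8 * t) + 2 * π * a / (3 * t) := by
  set f : ℝ → ℝ := fun x => cos x + a * sin (2 * x) with hf_def
  have hf (x : ℝ) : HasDerivAt f (-sin x + 2 * a * cos (2 * x)) x := by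
    have h2x : HasDerivAt (fun x => 2 * x) 2 x := by simpa using (hasDerivAt_id x).const_mul 2
    exact ((hasDerivAt_cos x).add (h2x.sin.const_mul a)).congr_deriv (by ring)
  have hf_zero : f 0 = 1 := by simp [f]
  have hf_pi_div_two : f (π / 2) = 0 := by simp [f, mul_div_cancel₀]
  have hc : π / (2 * t) ≠ 0 := by positivity
  have hct : π / (2 * t) * t = π / 2 := by field_simp
  have hℓf : ℓ = fun s => exp (K * s) * f (π / (2 * t) * s) := by
    funext s
    rw [hℓ, hf_def, show π * s / t = 2 * (π / (2 * t) * s) by field_simp,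
      show π * s / (2 * t) = π / (2 * t) * s by ring]
  rw [hℓf, integral_deriv_exp_mul_comp_mul_sq_mul_exp K t hc hf (by fun_prop), hct,
    integral_cos_add_mul_sin_two_mul_sq, integral_neg_sin_add_mul_cos_two_mul_sq,
    hf_zero, hf_pi_div_two]
  field_simp
  ring
end

section
/- Let t > 0, K ≠ 0, α > 1 and define ℓ(s) = (∫₀^{t-s} e^{Kr/(α-1)} dr)/(∫₀^t e^{Kr/(α-1)} dr) for s ∈ [0,t]. Then ∫₀ᵗ e^{2Ks/(α-1)}·(ℓ'(s) + (K/(α-1))ℓ(s))² ds = (K/(2(α-1)))·coth(Kt/(2(α-1))). -/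
open Real intervalIntegral

noncomputable def coth (x : ℝ) : ℝ := Real.cosh x / Real.sinh x

/-!
With `c = K / (α - 1)` one has `c ∫₀ˣ e^{cr} dr = e^{cx} - 1`, so
`ℓ s = (e^{c(t-s)} - 1) / (e^{ct} - 1)` and `ℓ' + c ℓ = -c / (e^{ct} - 1)` is constant.
The integral is then `(c / (e^{ct} - 1))² (e^{2ct} - 1) / (2c) = (c / 2) (e^{ct} + 1) / (e^{ct} - 1)`,
which is `(c / 2) coth (ct / 2)`.
-/

lemma integral_exp_mul_zero_to {a : ℝ} (ha : a ≠ 0) (x : ℝ) :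
    ∫ r in (0:ℝ)..x, exp (a * r) = (exp (a * x) - 1) / a := by
  rw [integral_comp_mul_left exp ha, integral_exp, mul_zero, exp_zero, smul_eq_mul,
    inv_mul_eq_div]

lemma deriv_exp_sub_one_div_add_mul (c t D s : ℝ) :
    deriv (fun s ↦ (exp (c * (t - s)) - 1) / D) s + c * ((exp (c * (t - s)) - 1) / D)
      = -c / D := by
  have hderiv : HasDerivAt (fun s ↦ (exp (c * (t - s)) - 1) / D)
      (exp (c * (t - s)) * (c * -1) / D) s :=
    ((((hasDerivAt_id s).const_sub t).const_mul c).exp.sub_const 1).div_const D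
  rw [hderiv.deriv]
  ring

lemma coth_half_eq {x : ℝ} (hx : x ≠ 0) : coth (x / 2) = (exp x + 1) / (exp x - 1) := by
  have hexp : exp x = exp (x / 2) * exp (x / 2) := by rw [← exp_add, add_halves]
  have hsinh : sinh (x / 2) ≠ 0 := sinh_ne_zero.2 (div_ne_zero hx two_ne_zero)
  have hsub : exp x - 1 ≠ 0 := sub_ne_zero.2 ((exp_eq_one_iff x).not.2 hx)
  rw [coth, div_eq_div_iff hsinh hsub, cosh_eq, sinh_eq, hexp, exp_neg]
  field_simp

theorem exp_weighted_deriv_combination_integral (t K α : ℝ) (ht : 0 < t)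
    (hK : K ≠ 0) (hα : 1 < α)
    (ℓ : ℝ → ℝ)
    (hℓ : ∀ s, ℓ s = (∫ r in (0:ℝ)..(t - s), Real.exp (K * r / (α - 1)))
        / (∫ r in (0:ℝ)..t, Real.exp (K * r / (α - 1)))) :
    (∫ s in (0:ℝ)..t, Real.exp (2 * K * s / (α - 1))
        * (deriv ℓ s + (K / (α - 1)) * ℓ s) ^ 2)
      = (K / (2 * (α - 1))) * coth (K * t / (2 * (α - 1))) := by
  set c := K / (α - 1) with hc_def
  have hc : c ≠ 0 := div_ne_zero hK (sub_pos.2 hα).ne'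
  have hct : c * t ≠ 0 := mul_ne_zero hc ht.ne'
  have hI : ∀ x, ∫ r in (0:ℝ)..x, exp (K * r / (α - 1)) = (exp (c * x) - 1) / c := by
    simp_rw [mul_div_right_comm K]
    exact integral_exp_mul_zero_to hc
  have hℓ_eq : ℓ = fun s ↦ (exp (c * (t - s)) - 1) / (exp (c * t) - 1) :=
    funext fun s ↦ by rw [hℓ, hI, hI, div_div_div_cancel_right₀ hc]
  have hintegrand : ∀ s, exp (2 * K * s / (α - 1)) * (deriv ℓ s + c * ℓ s) ^ 2
      = (c / (exp (c * t) - 1)) ^ 2 * exp (2 * c * s) := fun s ↦ by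
    rw [hℓ_eq, deriv_exp_sub_one_div_add_mul, mul_div_right_comm, mul_div_assoc, ← hc_def]
    ring
  simp_rw [hintegrand]
  rw [integral_const_mul, integral_exp_mul_zero_to (mul_ne_zero two_ne_zero hc),
    show K * t / (2 * (α - 1)) = c * t / 2 by rw [hc_def]; field_simp,
    show K / (2 * (α - 1)) = c / 2 by rw [hc_def]; field_simp, coth_half_eq hct,
    show 2 * c * t = c * t + c * t by ring, exp_add]
  have hsub : exp (c * t) - 1 ≠ 0 := sub_ne_zero.2 ((exp_eq_one_iff _).not.2 hct)
  field_simp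
  ring
end
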